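/- arXiv:1210.1746 — 6 statements merged into one kernel-verified Lean document; each statement's English description precedes it below -/
import Mathlib

section
/- Let φ : [0,1] → [0,1] be the tent map φ(x) = 2x for x ∈ [0,1/2) and φ(x) = 2(1−x) for x ∈ [1/2,1]. Then for every x ∈ [0,1], ∑_{n=0}^{∞} (1/4)^n φ^n(x) = 2x − x², where φ^n denotes the n-th iterate and φ^0(x) = x. -/
noncomputable def tentMap (x : ℝ) : ℝ := if x < 1 / 2 then 2 * x else 2 * (1 - x)

lemma tentMap_mem {x : ℝ} (hx : x ∈ Set.Icc (0 : ℝ) 1) :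
    tentMap x ∈ Set.Icc (0 : ℝ) 1 := by
  obtain ⟨h0, h1⟩ := hx
  unfold tentMap
  split <;> constructor <;> linarith

lemma tentMap_iter_mem {x : ℝ} (hx : x ∈ Set.Icc (0 : ℝ) 1) (n : ℕ) :
    tentMap^[n] x ∈ Set.Icc (0 : ℝ) 1 := by
  induction n with
  | zero => simpa using hx
  | succ n ih =>
    rw [Function.iterate_succ_apply']
    exact tentMap_mem ih

lemma key (y : ℝ) : 2 * y - y ^ 2 = y + (1 / 4) * (2 * tentMap y - (tentMap y) ^ 2) := by
  unfold tentMap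
  split <;> ring

lemma partial_sum (x : ℝ) (N : ℕ) :
    ∑ n ∈ Finset.range N, (1 / 4 : ℝ) ^ n * tentMap^[n] x
      = (2 * x - x ^ 2) - (1 / 4 : ℝ) ^ N * (2 * tentMap^[N] x - (tentMap^[N] x) ^ 2) := by
  induction N with
  | zero => simp
  | succ N ih =>
    rw [Finset.sum_range_succ, ih, Function.iterate_succ_apply']
    linear_combination (-(1 / 4 : ℝ) ^ N) * key (tentMap^[N] x)

theorem tent_quarter_series (x : ℝ) (hx : x ∈ Set.Icc (0 : ℝ) 1) :
    ∑' n : ℕ, (1 / 4 : ℝ) ^ n * tentMap^[n] x = 2 * x - x ^ 2 := by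
  have hmem := tentMap_iter_mem hx
  have hsummable : Summable (fun n : ℕ => (1 / 4 : ℝ) ^ n * tentMap^[n] x) := by
    apply Summable.of_nonneg_of_le
      (fun n => mul_nonneg (by positivity) (hmem n).1)
      (fun n => ?_)
      (summable_geometric_of_lt_one (by norm_num) (by norm_num : (1/4 : ℝ) < 1))
    calc (1 / 4 : ℝ) ^ n * tentMap^[n] x ≤ (1/4 : ℝ) ^ n * 1 := by
            exact mul_le_mul_of_nonneg_left (hmem n).2 (by positivity)
      _ = (1/4 : ℝ) ^ n := by ring
  refine (hsummable.hasSum_iff_tendsto_nat.2 ?_).tsum_eq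
  have htend : Filter.Tendsto
      (fun N : ℕ => (1 / 4 : ℝ) ^ N * (2 * tentMap^[N] x - (tentMap^[N] x) ^ 2))
      Filter.atTop (nhds 0) := by
    apply squeeze_zero_norm (fun N => ?_)
      (tendsto_pow_atTop_nhds_zero_of_lt_one (by norm_num) (by norm_num : (1/4:ℝ) < 1))
    have h0 := (hmem N).1
    have h1 := (hmem N).2
    rw [norm_mul, Real.norm_eq_abs, Real.norm_eq_abs, abs_of_nonneg (by positivity),
      abs_of_nonneg (by nlinarith)]
    nlinarith [mul_nonneg (pow_nonneg (by norm_num : (0:ℝ) ≤ 1/4) N)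
      (sq_nonneg (1 - tentMap^[N] x))]
  have : Filter.Tendsto
      (fun N : ℕ => (2 * x - x ^ 2) - (1 / 4 : ℝ) ^ N * (2 * tentMap^[N] x - (tentMap^[N] x) ^ 2))
      Filter.atTop (nhds ((2 * x - x ^ 2) - 0)) := (tendsto_const_nhds).sub htend
  simp only [sub_zero] at this
  convert this using 1
  funext N
  exact partial_sum x N
end

section
/- Let φ : [0,1] → [0,1] be the tent map φ(x) = 2x for x ∈ [0,1/2) and φ(x) = 2(1−x) for x ∈ [1/2,1]. Then for every x ∈ [0,1], ∑_{n=0}^{∞} (1/2)^n (φ^n(x))² = 2x − x². -/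
/-!
With `g y = 2 y - y²`, the tent map satisfies the functional equation
`g y = y² + ½ g (φ y)`. Iterating it along the orbit telescopes the partial sums to
`g x - 2⁻ᴺ g (φᴺ x)`, and the remainder vanishes because `φ` keeps the orbit in `[0, 1]`,
where `g` is bounded.
-/

open Filter Topology Finset

section Telescoping

variable {α E : Type*} {T : α → α}

theorem sum_range_pow_smul_iterate_of_eq_add_smul_comp {R : Type*} [Ring R] [AddCommGroup E]
    [Module R E] {g h : α → E} {c : R} (hgh : ∀ y, g y = h y + c • g (T y))
    (x : α) (N : ℕ) :
    ∑ n ∈ range N, c ^ n • h (T^[n] x) = g x - c ^ N • g (T^[N] x) := by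
  induction N with
  | zero => simp
  | succ N ih =>
    rw [sum_range_succ, ih, Function.iterate_succ_apply', hgh (T^[N] x), pow_succ, mul_smul,
      smul_add]
    abel

theorem hasSum_pow_smul_iterate_of_eq_add_smul_comp [NormedAddCommGroup E] [NormedSpace ℝ E]
    {g h : α → E} {c : ℝ} (hc : |c| < 1)
    (hgh : ∀ y, g y = h y + c • g (T y)) {x : α} {C : ℝ} (hC : ∀ n, ‖g (T^[n] x)‖ ≤ C) :
    HasSum (fun n ↦ c ^ n • h (T^[n] x)) (g x) := by
  have h_bound : ∀ n, ‖h (T^[n] x)‖ ≤ 2 * C := fun n ↦ by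
    have h_eq : h (T^[n] x) = g (T^[n] x) - c • g (T^[n + 1] x) := by
      rw [Function.iterate_succ_apply', hgh (T^[n] x), add_sub_cancel_right]
    calc ‖h (T^[n] x)‖ ≤ ‖g (T^[n] x)‖ + |c| * ‖g (T^[n + 1] x)‖ := by
          rw [h_eq, ← Real.norm_eq_abs, ← norm_smul]; exact norm_sub_le _ _
      _ ≤ C + 1 * C := by gcongr <;> exact hC _
      _ = 2 * C := by ring
  have hsummable : Summable fun n ↦ ‖c ^ n • h (T^[n] x)‖ := by
    refine Summable.of_nonneg_of_le (fun _ ↦ norm_nonneg _) (fun n ↦ ?_)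
      ((summable_geometric_of_abs_lt_one hc).abs.mul_right (2 * C))
    rw [norm_smul, norm_pow, Real.norm_eq_abs, abs_pow]
    exact mul_le_mul_of_nonneg_left (h_bound n) (by positivity)
  rw [hasSum_iff_tendsto_nat_of_summable_norm hsummable]
  simp only [sum_range_pow_smul_iterate_of_eq_add_smul_comp hgh]
  have hrem : Tendsto (fun N ↦ c ^ N • g (T^[N] x)) atTop (𝓝 0) :=
    squeeze_zero_norm (a := fun N ↦ |c| ^ N * C)
      (fun N ↦ by rw [norm_smul, norm_pow, Real.norm_eq_abs]; gcongr; exact hC N)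
      (by simpa using (tendsto_pow_atTop_nhds_zero_of_lt_one (abs_nonneg c) hc).mul_const C)
  simpa using tendsto_const_nhds.sub hrem

end Telescoping

open Set

theorem mapsTo_tentMap : MapsTo tentMap (Icc 0 1) (Icc 0 1) := by
  rintro y ⟨h0, h1⟩
  unfold tentMap
  split_ifs <;> constructor <;> linarith

theorem two_mul_sub_sq_eq_sq_add_half_tentMap (y : ℝ) :
    2 * y - y ^ 2 = y ^ 2 + (1 / 2 : ℝ) • (2 * tentMap y - tentMap y ^ 2) := by
  unfold tentMap
  split_ifs <;> simp only [smul_eq_mul] <;> ring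

theorem tent_half_square_series (x : ℝ) (hx : x ∈ Set.Icc (0 : ℝ) 1) :
    ∑' n : ℕ, (1 / 2 : ℝ) ^ n * (tentMap^[n] x) ^ 2 = 2 * x - x ^ 2 := by
  have hbound (n : ℕ) : ‖2 * tentMap^[n] x - (tentMap^[n] x) ^ 2‖ ≤ 1 := by
    obtain ⟨h0, h1⟩ := mapsTo_tentMap.iterate n hx
    rw [Real.norm_eq_abs, abs_le]
    constructor <;> nlinarith
  exact (hasSum_pow_smul_iterate_of_eq_add_smul_comp (g := fun y ↦ 2 * y - y ^ 2)
    (h := fun y ↦ y ^ 2) (by norm_num [abs_of_pos]) two_mul_sub_sq_eq_sq_add_half_tentMap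
    hbound).tsum_eq
end

section
/- The Gauss map φ : (0,1] → [0,1), φ(x) = {1/x} (fractional part), preserves the Gauss measure dμ(x) = (1/ln 2) dx/(1+x): for every Borel set A ⊆ (0,1), μ(φ^{-1} A) = μ(A). -/
open MeasureTheory

noncomputable def gaussMap (x : ℝ) : ℝ := if x = 0 then 0 else Int.fract x⁻¹

/-! The inverse branches of the Gauss map are `ψₙ y = 1 / (n + 1 + y)` (`gaussBranch n`), and the
sets `ψₙ '' A` partition `φ⁻¹' A ∩ (0, 1)`. On each branch the Jacobian is `|ψₙ'| = ψₙ²`, and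
`ψₙ² / (1 + ψₙ) = ψₙ - ψₙ₊₁`, so the pulled-back Gauss density telescopes over the branches to
`ψ₀ y = 1 / (1 + y)`, the tail `∫_A ψₙ` tending to `0`. -/

open Set Filter Topology Function

noncomputable def gaussBranch (n : ℕ) (y : ℝ) : ℝ := ((n : ℝ) + 1 + y)⁻¹

section GaussBranch

variable {n : ℕ} {y : ℝ}

lemma gaussBranch_pos (hy : 0 ≤ y) : 0 < gaussBranch n y := by
  unfold gaussBranch; positivity

lemma gaussBranch_le_inv (hy : 0 ≤ y) : gaussBranch n y ≤ ((n : ℝ) + 1)⁻¹ :=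
  inv_anti₀ (by positivity) (by linarith)

lemma inv_gaussBranch (n : ℕ) (y : ℝ) : (gaussBranch n y)⁻¹ = (n : ℝ) + 1 + y :=
  inv_inv _

lemma gaussBranch_mem_Ioo (hy : 0 < y) : gaussBranch n y ∈ Ioo 0 1 :=
  ⟨gaussBranch_pos hy.le, inv_lt_one_of_one_lt₀ (by linarith [n.cast_nonneg (α := ℝ)])⟩

lemma floor_inv_gaussBranch (hy : y ∈ Ico 0 1) : ⌊(gaussBranch n y)⁻¹⌋₊ = n + 1 := by
  rw [inv_gaussBranch, Nat.floor_eq_iff (by linarith [hy.1, n.cast_nonneg (α := ℝ)])]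
  push_cast
  constructor <;> linarith [hy.1, hy.2]

lemma gaussMap_gaussBranch (hy : y ∈ Ico 0 1) : gaussMap (gaussBranch n y) = y := by
  rw [gaussMap, if_neg (gaussBranch_pos hy.1).ne', inv_gaussBranch,
    show (n : ℝ) + 1 + y = ((n + 1 : ℕ) : ℤ) + y by push_cast; ring, Int.fract_intCast_add,
    Int.fract_eq_self.2 hy]

lemma gaussBranch_gaussMap {x : ℝ} (hx : x ∈ Ioo 0 1) :
    gaussBranch (⌊x⁻¹⌋₊ - 1) (gaussMap x) = x := by
  have hfloor : 1 ≤ ⌊x⁻¹⌋₊ := Nat.le_floor (by simpa using (one_lt_inv₀ hx.1).2 hx.2 |>.le)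
  rw [gaussBranch, gaussMap, if_neg hx.1.ne', Nat.cast_sub hfloor, Nat.cast_one, sub_add_cancel,
    natCast_floor_eq_intCast_floor (inv_pos.2 hx.1).le, Int.floor_add_fract, inv_inv]

lemma hasDerivAt_gaussBranch (hy : 0 ≤ y) :
    HasDerivAt (gaussBranch n) (-gaussBranch n y ^ 2) y := by
  rw [show -gaussBranch n y ^ 2 = -1 / ((n : ℝ) + 1 + y) ^ 2 by simp [gaussBranch, div_eq_mul_inv]]
  exact ((hasDerivAt_id' y).const_add ((n : ℝ) + 1)).inv (by positivity)

lemma injOn_gaussBranch : InjOn (gaussBranch n) (Ici 0) := fun y₁ _ y₂ _ h => by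
  simpa [gaussBranch] using h

lemma continuousOn_gaussBranch : ContinuousOn (gaussBranch n) (Ici 0) := fun _ hy =>
  (hasDerivAt_gaussBranch hy).continuousAt.continuousWithinAt

lemma sq_gaussBranch_mul_inv_one_add (hy : 0 ≤ y) :
    gaussBranch n y ^ 2 * (1 + gaussBranch n y)⁻¹ = gaussBranch n y - gaussBranch (n + 1) y := by
  have ht : 0 < (n : ℝ) + 1 + y := by positivity
  unfold gaussBranch
  push_cast
  field_simp
  ring

lemma gaussBranch_zero : gaussBranch 0 = fun x => (1 + x)⁻¹ := by
  ext; simp [gaussBranch]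

end GaussBranch

variable {A : Set ℝ}

lemma preimage_gaussMap_inter_Ioo (hA : A ⊆ Ioo 0 1) :
    gaussMap ⁻¹' A ∩ Ioo 0 1 = ⋃ n, gaussBranch n '' A := by
  ext x
  simp only [mem_inter_iff, mem_preimage, mem_iUnion, mem_image]
  constructor
  · rintro ⟨hxA, hx⟩
    exact ⟨_, _, hxA, gaussBranch_gaussMap hx⟩
  · rintro ⟨n, y, hyA, rfl⟩
    exact ⟨(gaussMap_gaussBranch (Ioo_subset_Ico_self (hA hyA))).symm ▸ hyA,
      gaussBranch_mem_Ioo (hA hyA).1⟩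

lemma pairwise_disjoint_image_gaussBranch (hA : A ⊆ Ico 0 1) :
    Pairwise (Disjoint on fun n => gaussBranch n '' A) := by
  intro m n hmn
  refine disjoint_left.2 ?_
  rintro _ ⟨y, hy, rfl⟩ ⟨z, hz, hyz⟩
  have h := congrArg (fun x => ⌊x⁻¹⌋₊) hyz
  simp only [floor_inv_gaussBranch (hA hy), floor_inv_gaussBranch (hA hz)] at h
  omega

lemma MeasurableSet.image_gaussBranch (hA : MeasurableSet A) (hA0 : A ⊆ Ici 0) (n : ℕ) :
    MeasurableSet (gaussBranch n '' A) :=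
  hA.image_of_continuousOn_injOn (continuousOn_gaussBranch.mono hA0) (injOn_gaussBranch.mono hA0)

lemma setIntegral_image_gaussBranch {E : Type*} [NormedAddCommGroup E] [NormedSpace ℝ E]
    (hA : MeasurableSet A) (hA0 : A ⊆ Ici 0) (n : ℕ) (g : ℝ → E) :
    ∫ x in gaussBranch n '' A, g x = ∫ y in A, gaussBranch n y ^ 2 • g (gaussBranch n y) := by
  rw [integral_image_eq_integral_abs_deriv_smul hA
    (fun y hy => (hasDerivAt_gaussBranch (hA0 hy)).hasDerivWithinAt) (injOn_gaussBranch.mono hA0)]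
  exact setIntegral_congr_fun hA fun y _ => by rw [abs_neg, abs_of_nonneg (sq_nonneg _)]

lemma integrableOn_gaussBranch (n : ℕ) : IntegrableOn (gaussBranch n) (Icc 0 1) :=
  (continuousOn_gaussBranch.mono Icc_subset_Ici_self).integrableOn_Icc

lemma tendsto_setIntegral_gaussBranch (hA0 : A ⊆ Ici 0) (hAfin : volume A < ⊤) :
    Tendsto (fun n => ∫ y in A, gaussBranch n y) atTop (𝓝 0) := by
  refine squeeze_zero_norm (fun n => norm_setIntegral_le_of_norm_le_const hAfin fun y hy => ?_)
    (by simpa using (tendsto_one_div_add_atTop_nhds_zero_nat (𝕜 := ℝ)).mul_const (volume.real A))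
  rw [Real.norm_of_nonneg (gaussBranch_pos (hA0 hy)).le]
  exact gaussBranch_le_inv (hA0 hy)

lemma setIntegral_image_gaussBranch_inv_one_add (hA : MeasurableSet A) (hA01 : A ⊆ Icc 0 1)
    (n : ℕ) :
    ∫ x in gaussBranch n '' A, (1 + x)⁻¹ =
      (∫ y in A, gaussBranch n y) - ∫ y in A, gaussBranch (n + 1) y := by
  rw [setIntegral_image_gaussBranch hA (hA01.trans Icc_subset_Ici_self), ← integral_sub
    ((integrableOn_gaussBranch n).mono_set hA01) ((integrableOn_gaussBranch (n + 1)).mono_set hA01)]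
  exact setIntegral_congr_fun hA fun y hy => by
    rw [smul_eq_mul, sq_gaussBranch_mul_inv_one_add (hA01 hy).1]

lemma tendsto_sum_range_sub_succ {G : Type*} [AddCommGroup G] [TopologicalSpace G]
    [ContinuousSub G] {f : ℕ → G} (hf : Tendsto f atTop (𝓝 0)) :
    Tendsto (fun N => ∑ n ∈ Finset.range N, (f n - f (n + 1))) atTop (𝓝 (f 0)) := by
  simpa only [Finset.sum_range_sub', sub_zero] using tendsto_const_nhds.sub hf (a := f 0)

theorem gauss_map_preserves_gauss_measure
    (A : Set ℝ) (hA : MeasurableSet A) (hA' : A ⊆ Set.Ioo (0 : ℝ) 1) :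
    (Real.log 2)⁻¹ * ∫ x in gaussMap ⁻¹' A ∩ Set.Ioo (0 : ℝ) 1, (1 + x)⁻¹ =
      (Real.log 2)⁻¹ * ∫ x in A, (1 + x)⁻¹ := by
  have hA01 : A ⊆ Icc 0 1 := hA'.trans Ioo_subset_Icc_self
  have hA0 : A ⊆ Ici 0 := hA01.trans Icc_subset_Ici_self
  have hint : IntegrableOn (fun x : ℝ => (1 + x)⁻¹) (gaussMap ⁻¹' A ∩ Ioo 0 1) :=
    (gaussBranch_zero ▸ integrableOn_gaussBranch 0).mono_set
      (inter_subset_right.trans Ioo_subset_Icc_self)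
  rw [preimage_gaussMap_inter_Ioo hA'] at hint ⊢
  have hsum := hasSum_integral_iUnion (hA.image_gaussBranch hA0)
    (pairwise_disjoint_image_gaussBranch (hA'.trans Ioo_subset_Ico_self)) hint
  simp only [setIntegral_image_gaussBranch_inv_one_add hA hA01] at hsum
  have hlim := tendsto_sum_range_sub_succ
    (tendsto_setIntegral_gaussBranch hA0 ((measure_mono hA').trans_lt measure_Ioo_lt_top))
  rw [gaussBranch_zero] at hlim
  rw [tendsto_nhds_unique hsum.tendsto_sum_nat hlim]
end

section
/- Let a ∈ ℝ, γ > 0, and define φ : ℝ \ {2a} → ℝ by φ(y) = y/2 + a − (γ²/2)/(y − 2a). Then φ preserves the probability measure dμ(x) = γ dx / (π[(x − 2a)² + γ²]): for every Borel set A ⊆ ℝ, μ(φ^{-1} A) = μ(A). -/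
/-!
With `b = 2a`, the equation `φ y = x` is the quadratic `(y - x)² = (x - b)² + γ²` in `y`, whose
roots `x ± √((x - b)² + γ²)` are inverse branches of `φ` onto the half-lines `y > b` and `y < b`.
Splitting `φ ⁻¹' A` along these half-lines and changing variables on each branch reduces the claim
to the transfer identity `ρ = |ψ₋'| ρ ∘ ψ₋ + |ψ₊'| ρ ∘ ψ₊` for the Cauchy density `ρ`; in fact each
branch carries exactly `ρ / 2`.
-/

open MeasureTheory Set Function

section InverseBranches

variable {α β : Type*} {φ : α → β} {ψ : β → α} {U : Set α} {A : Set β}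

lemma preimage_inter_eq_image_of_leftInverse (hφψ : LeftInverse φ ψ) (hψU : ∀ x, ψ x ∈ U)
    (hψφ : ∀ y ∈ U, ψ (φ y) = y) : φ ⁻¹' A ∩ U = ψ '' A := by
  ext y
  constructor
  · rintro ⟨hyA, hyU⟩
    exact ⟨φ y, hyA, hψφ y hyU⟩
  · rintro ⟨x, hxA, rfl⟩
    exact ⟨by rwa [mem_preimage, hφψ x], hψU x⟩

end InverseBranches

section InverseBranchesReal

variable {φ ψ ψ' f : ℝ → ℝ} {U A : Set ℝ}

lemma setIntegral_preimage_inter_eq_of_leftInverse (hψ : ∀ x, HasDerivAt ψ (ψ' x) x)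
    (hφψ : LeftInverse φ ψ) (hψU : ∀ x, ψ x ∈ U) (hψφ : ∀ y ∈ U, ψ (φ y) = y)
    (hA : MeasurableSet A) :
    ∫ y in φ ⁻¹' A ∩ U, f y = ∫ x in A, |ψ' x| * f (ψ x) := by
  rw [preimage_inter_eq_image_of_leftInverse hφψ hψU hψφ]
  exact integral_image_eq_integral_abs_deriv_smul hA (fun x _ => (hψ x).hasDerivWithinAt)
    hφψ.injective.injOn f

lemma integrableOn_abs_deriv_mul_comp (hψ : ∀ x, HasDerivAt ψ (ψ' x) x) (hψinj : Injective ψ)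
    (hA : MeasurableSet A) (hf : Integrable f) :
    IntegrableOn (fun x => |ψ' x| * f (ψ x)) A :=
  (integrableOn_image_iff_integrableOn_abs_deriv_smul hA (fun x _ => (hψ x).hasDerivWithinAt)
    hψinj.injOn f).mp hf.integrableOn

lemma setIntegral_eq_inter_Iio_add_inter_Ioi {E : Type*} [NormedAddCommGroup E]
    [NormedSpace ℝ E] {μ : Measure ℝ} [NullSingletonClass μ] {g : ℝ → E} {s : Set ℝ}
    (hg : IntegrableOn g s μ) (b : ℝ) :
    ∫ x in s, g x ∂μ = ∫ x in s ∩ Iio b, g x ∂μ + ∫ x in s ∩ Ioi b, g x ∂μ := by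
  rw [← integral_inter_add_sdiff measurableSet_Iio hg, sdiff_eq, compl_Iio]
  congr 1
  exact setIntegral_congr_set ((ae_eq_refl s).inter Ioi_ae_eq_Ici).symm

theorem setIntegral_preimage_eq_of_inverse_branches {ψ₁ ψ₂ ψ₁' ψ₂' : ℝ → ℝ} {b : ℝ}
    (hf : Integrable f)
    (hψ₁ : ∀ x, HasDerivAt ψ₁ (ψ₁' x) x) (hψ₂ : ∀ x, HasDerivAt ψ₂ (ψ₂' x) x)
    (hφψ₁ : LeftInverse φ ψ₁) (hφψ₂ : LeftInverse φ ψ₂)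
    (hψ₁_lt : ∀ x, ψ₁ x < b) (hψ₂_gt : ∀ x, b < ψ₂ x)
    (hψ₁φ : ∀ y < b, ψ₁ (φ y) = y) (hψ₂φ : ∀ y, b < y → ψ₂ (φ y) = y)
    (hf_eq : ∀ x, |ψ₁' x| * f (ψ₁ x) + |ψ₂' x| * f (ψ₂ x) = f x) (hA : MeasurableSet A) :
    ∫ y in φ ⁻¹' A, f y = ∫ x in A, f x := by
  rw [setIntegral_eq_inter_Iio_add_inter_Ioi hf.integrableOn b,
    setIntegral_preimage_inter_eq_of_leftInverse (U := Iio b) hψ₁ hφψ₁ hψ₁_lt hψ₁φ hA,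
    setIntegral_preimage_inter_eq_of_leftInverse (U := Ioi b) hψ₂ hφψ₂ hψ₂_gt hψ₂φ hA,
    ← integral_add (integrableOn_abs_deriv_mul_comp hψ₁ hφψ₁.injective hA hf)
      (integrableOn_abs_deriv_mul_comp hψ₂ hφψ₂.injective hA hf)]
  simp_rw [hf_eq]

end InverseBranchesReal

noncomputable def halfBoole (b γ y : ℝ) : ℝ := (y + b) / 2 - γ ^ 2 / 2 / (y - b)

noncomputable def halfBooleBranch (b γ s x : ℝ) : ℝ := x + s * √((x - b) ^ 2 + γ ^ 2)

lemma abs_lt_sqrt_sq_add_sq {γ : ℝ} (hγ : γ ≠ 0) (t : ℝ) : |t| < √(t ^ 2 + γ ^ 2) := by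
  rw [Real.lt_sqrt (abs_nonneg t), sq_abs]
  exact lt_add_of_pos_right _ (by positivity)

section HalfBoole

variable {b γ s : ℝ}

lemma halfBoole_eq_of_sq {x y : ℝ} (hγ : γ ≠ 0) (h : (y - x) ^ 2 = (x - b) ^ 2 + γ ^ 2) :
    halfBoole b γ y = x := by
  have hyb : y - b ≠ 0 := by
    rintro hyb
    rw [sub_eq_zero.mp hyb] at h
    exact hγ (pow_eq_zero_iff two_ne_zero |>.mp (by linear_combination -h))
  unfold halfBoole
  field_simp
  linear_combination h

lemma leftInverse_halfBoole_halfBooleBranch (hγ : γ ≠ 0) (hs : s ^ 2 = 1) :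
    LeftInverse (halfBoole b γ) (halfBooleBranch b γ s) := fun x =>
  halfBoole_eq_of_sq hγ <| by
    rw [halfBooleBranch, add_sub_cancel_left, mul_pow, hs, one_mul, Real.sq_sqrt (by positivity)]

lemma mul_halfBooleBranch_sub_pos (hγ : γ ≠ 0) (hs : s ^ 2 = 1) (x : ℝ) :
    0 < s * (halfBooleBranch b γ s x - b) := by
  have h := abs_lt_sqrt_sq_add_sq hγ (s * (x - b))
  rw [mul_pow, hs, one_mul] at h
  have : s * (halfBooleBranch b γ s x - b) = s * (x - b) + √((x - b) ^ 2 + γ ^ 2) := by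
    rw [halfBooleBranch]; linear_combination √((x - b) ^ 2 + γ ^ 2) * hs
  linarith [neg_abs_le (s * (x - b))]

lemma halfBooleBranch_halfBoole (hs : s ^ 2 = 1) {y : ℝ} (hy : 0 < s * (y - b)) :
    halfBooleBranch b γ s (halfBoole b γ y) = y := by
  set x := halfBoole b γ y
  have hyb : y - b ≠ 0 := by rintro h; simp [h] at hy
  have hsq : (y - x) ^ 2 = (x - b) ^ 2 + γ ^ 2 := by
    simp only [x, halfBoole]; field_simp; ring
  have hmul : (y - x) * (y - b) = ((y - b) ^ 2 + γ ^ 2) / 2 := by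
    simp only [x, halfBoole]; field_simp; ring
  have hpos : 0 < s * (y - x) := by
    refine (pos_iff_pos_of_mul_pos (b := s * (y - b)) ?_).mpr hy
    have : (s * (y - x)) * (s * (y - b)) = ((y - b) ^ 2 + γ ^ 2) / 2 := by
      linear_combination (y - x) * (y - b) * hs + hmul
    rw [this]; positivity
  have hroot : √((x - b) ^ 2 + γ ^ 2) = s * (y - x) := by
    rw [← hsq, ← Real.sqrt_sq hpos.le, mul_pow, hs, one_mul]
  rw [halfBooleBranch, hroot]
  linear_combination (y - x) * hs

lemma hasDerivAt_halfBooleBranch (hγ : γ ≠ 0) (s x : ℝ) :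
    HasDerivAt (halfBooleBranch b γ s) (1 + s * ((x - b) / √((x - b) ^ 2 + γ ^ 2))) x := by
  have hpos : 0 < (x - b) ^ 2 + γ ^ 2 := by positivity
  have hq : HasDerivAt (fun x => (x - b) ^ 2 + γ ^ 2) (2 * (x - b)) x := by
    simpa using (((hasDerivAt_id x).sub_const b).pow 2).add_const (γ ^ 2)
  have h := (hasDerivAt_id' x).add ((hq.sqrt hpos.ne').const_mul s)
  rwa [mul_div_mul_left _ _ two_ne_zero] at h

lemma abs_deriv_mul_cauchy_halfBooleBranch (hγ : γ ≠ 0) (hs : s ^ 2 = 1) (x : ℝ) :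
    |1 + s * ((x - b) / √((x - b) ^ 2 + γ ^ 2))| *
        (γ / (Real.pi * ((halfBooleBranch b γ s x - b) ^ 2 + γ ^ 2))) =
      γ / (Real.pi * ((x - b) ^ 2 + γ ^ 2)) / 2 := by
  set R := √((x - b) ^ 2 + γ ^ 2)
  have hR : 0 < R := Real.sqrt_pos.mpr (by positivity)
  have hR2 : R ^ 2 = (x - b) ^ 2 + γ ^ 2 := Real.sq_sqrt (by positivity)
  have hsum : 0 < R + s * (x - b) := by
    have h := mul_halfBooleBranch_sub_pos (b := b) hγ hs x
    rw [halfBooleBranch] at h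
    linear_combination h + R * hs
  have hderiv : 1 + s * ((x - b) / R) = (R + s * (x - b)) / R := by field_simp
  have hbranch : (halfBooleBranch b γ s x - b) ^ 2 + γ ^ 2 = 2 * R * (R + s * (x - b)) := by
    rw [halfBooleBranch]; linear_combination R ^ 2 * hs - hR2
  rw [hderiv, abs_of_pos (by positivity), hbranch, ← hR2]
  field_simp

end HalfBoole

lemma integrable_cauchy_density (b : ℝ) {γ : ℝ} (hγ : 0 ≤ γ) :
    Integrable fun x => γ / (Real.pi * ((x - b) ^ 2 + γ ^ 2)) := by
  refine (ProbabilityTheory.integrable_cauchyPDFReal b (γ := γ.toNNReal)).congr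
    (.of_forall fun x => ?_)
  rw [ProbabilityTheory.cauchyPDFReal_def, Real.coe_toNNReal _ hγ]
  simp only [div_eq_mul_inv, mul_inv]
  ring

theorem half_boole_preserves_cauchy (a γ : ℝ) (hγ : 0 < γ)
    (φ : ℝ → ℝ) (hφ : ∀ y, φ y = y / 2 + a - (γ ^ 2 / 2) / (y - 2 * a))
    (A : Set ℝ) (hA : MeasurableSet A) :
    ∫ x in φ ⁻¹' A, γ / (Real.pi * ((x - 2 * a) ^ 2 + γ ^ 2)) =
      ∫ x in A, γ / (Real.pi * ((x - 2 * a) ^ 2 + γ ^ 2)) := by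
  obtain rfl : φ = halfBoole (2 * a) γ := funext fun y => by rw [hφ, halfBoole]; ring
  have hγ₀ := hγ.ne'
  have hneg : (-1 : ℝ) ^ 2 = 1 := by norm_num
  have hone : (1 : ℝ) ^ 2 = 1 := by norm_num
  refine setIntegral_preimage_eq_of_inverse_branches (b := 2 * a)
    (integrable_cauchy_density _ hγ.le)
    (hasDerivAt_halfBooleBranch hγ₀ (-1)) (hasDerivAt_halfBooleBranch hγ₀ 1)
    (leftInverse_halfBoole_halfBooleBranch hγ₀ hneg)
    (leftInverse_halfBoole_halfBooleBranch hγ₀ hone)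
    (fun x => by linarith [mul_halfBooleBranch_sub_pos (b := 2 * a) hγ₀ hneg x])
    (fun x => by linarith [mul_halfBooleBranch_sub_pos (b := 2 * a) hγ₀ hone x])
    (fun y hy => halfBooleBranch_halfBoole hneg (by linarith))
    (fun y hy => halfBooleBranch_halfBoole hone (by linarith)) (fun x => ?_) hA
  rw [abs_deriv_mul_cauchy_halfBooleBranch hγ₀ hneg,
    abs_deriv_mul_cauchy_halfBooleBranch hγ₀ hone]
  ring
end

section
/- Let α ∈ (0,1), β > 0, and φ(y) = αy − β/y for y ≠ 0. Then φ preserves the probability measure dμ(x) = √(β(1−α)) dx / (π[x²(1−α) + β]): for every Borel set A ⊆ ℝ, μ(φ^{-1} A) = μ(A). -/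
/-!
On `y > 0` and on `y < 0` the map `φ y = α y - β / y` is an increasing bijection onto `ℝ`, with
inverses the two roots `ψ± x = (x ± √(x² + 4αβ)) / (2α)` of `α y² - x y - β = 0`. By the change
of variables formula on each half-line, `φ` preserves a density `g` as soon as the transfer
identity `ψ₊' · g ∘ ψ₊ + ψ₋' · g ∘ ψ₋ = g` holds, and for the centred Cauchy density of scale `γ`
with `γ² (1 - α) = β` it becomes, for `q = √(x² + 4αβ)`, a polynomial identity modulo
`q² = x² + 4αβ`.
-/

open MeasureTheory Set Function

open scoped NNReal

section InverseBranch

variable {E : Type*} [NormedAddCommGroup E] [NormedSpace ℝ E]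
  {φ ψ ψ' : ℝ → ℝ} {A : Set ℝ}

theorem setIntegral_range_inter_preimage_eq (hψ : LeftInverse φ ψ)
    (hψ' : ∀ x, HasDerivAt ψ (ψ' x) x) (hA : MeasurableSet A) (g : ℝ → E) :
    ∫ y in range ψ ∩ φ ⁻¹' A, g y = ∫ x in A, |ψ' x| • g (ψ x) := by
  rw [← hψ.image_eq]
  exact integral_image_eq_integral_abs_deriv_smul hA (fun x _ ↦ (hψ' x).hasDerivWithinAt)
    hψ.injective.injOn g

theorem integrableOn_range_inter_preimage_iff (hψ : LeftInverse φ ψ)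
    (hψ' : ∀ x, HasDerivAt ψ (ψ' x) x) (hA : MeasurableSet A) (g : ℝ → E) :
    IntegrableOn g (range ψ ∩ φ ⁻¹' A) ↔ IntegrableOn (fun x ↦ |ψ' x| • g (ψ x)) A := by
  rw [← hψ.image_eq]
  exact integrableOn_image_iff_integrableOn_abs_deriv_smul hA
    (fun x _ ↦ (hψ' x).hasDerivWithinAt) hψ.injective.injOn g

theorem setIntegral_preimage_eq_of_transfer {ψ₁ ψ₂ ψ₁' ψ₂' : ℝ → ℝ} {g : ℝ → E}
    (hφ : Measurable φ) (hA : MeasurableSet A)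
    (hψ₁ : LeftInverse φ ψ₁) (hψ₂ : LeftInverse φ ψ₂)
    (hψ₁' : ∀ x, HasDerivAt ψ₁ (ψ₁' x) x) (hψ₂' : ∀ x, HasDerivAt ψ₂ (ψ₂' x) x)
    (hrange₂ : MeasurableSet (range ψ₂)) (hdisj : Disjoint (range ψ₁) (range ψ₂))
    (hcover : volume (range ψ₁ ∪ range ψ₂)ᶜ = 0) (hg : Integrable g)
    (htransfer : ∀ x, |ψ₁' x| • g (ψ₁ x) + |ψ₂' x| • g (ψ₂ x) = g x) :
    ∫ y in φ ⁻¹' A, g y = ∫ x in A, g x := by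
  have hint₁ := (integrableOn_range_inter_preimage_iff hψ₁ hψ₁' hA g).mp hg.integrableOn
  have hint₂ := (integrableOn_range_inter_preimage_iff hψ₂ hψ₂' hA g).mp hg.integrableOn
  calc ∫ y in φ ⁻¹' A, g y = ∫ y in (range ψ₁ ∪ range ψ₂) ∩ φ ⁻¹' A, g y :=
        setIntegral_congr_set (inter_ae_eq_right_of_ae_eq_univ (ae_eq_univ.mpr hcover)).symm
    _ = (∫ y in range ψ₁ ∩ φ ⁻¹' A, g y) + ∫ y in range ψ₂ ∩ φ ⁻¹' A, g y := by
        rw [union_inter_distrib_right]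
        exact setIntegral_union (hdisj.mono inter_subset_left inter_subset_left)
          (hrange₂.inter (hφ hA)) hg.integrableOn hg.integrableOn
    _ = (∫ x in A, |ψ₁' x| • g (ψ₁ x)) + ∫ x in A, |ψ₂' x| • g (ψ₂ x) := by
        rw [setIntegral_range_inter_preimage_eq hψ₁ hψ₁' hA,
          setIntegral_range_inter_preimage_eq hψ₂ hψ₂' hA]
    _ = ∫ x in A, g x := by
        rw [← integral_add hint₁ hint₂]
        simp only [htransfer]

end InverseBranch

section Boole

open ProbabilityTheory
open scoped Real

variable {α β σ : ℝ}

/-- For `σ = ±1`, the inverse of `y ↦ α y - β / y` on the half-line `0 < σ y`. -/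
noncomputable def booleBranch (α β σ x : ℝ) : ℝ :=
  (x + σ * √(x ^ 2 + 4 * α * β)) / (2 * α)

noncomputable def booleBranchDeriv (α β σ x : ℝ) : ℝ :=
  (1 + σ * x / √(x ^ 2 + 4 * α * β)) / (2 * α)

theorem abs_mul_lt_sqrt_sq_add (hσ : σ ^ 2 = 1) (x : ℝ) {c : ℝ} (hc : 0 < c) :
    |σ * x| < √(x ^ 2 + c) :=
  abs_lt_of_sq_lt_sq (by rw [mul_pow, hσ, one_mul, Real.sq_sqrt (by positivity)]; linarith)
    (Real.sqrt_nonneg _)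

theorem mul_booleBranch_pos (hα : 0 < α) (hβ : 0 < β) (hσ : σ ^ 2 = 1) (x : ℝ) :
    0 < σ * booleBranch α β σ x := by
  have hlt := abs_mul_lt_sqrt_sq_add hσ x (c := 4 * α * β) (by positivity)
  have hnum : 0 < σ * x + √(x ^ 2 + 4 * α * β) := by linarith [neg_abs_le (σ * x)]
  have hmul : σ * booleBranch α β σ x = (σ * x + √(x ^ 2 + 4 * α * β)) / (2 * α) := by
    rw [booleBranch]; linear_combination (√(x ^ 2 + 4 * α * β) / (2 * α)) * hσ
  rw [hmul]
  positivity

theorem booleBranchDeriv_pos (hα : 0 < α) (hβ : 0 < β) (hσ : σ ^ 2 = 1) (x : ℝ) :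
    0 < booleBranchDeriv α β σ x := by
  have hlt := abs_mul_lt_sqrt_sq_add hσ x (c := 4 * α * β) (by positivity)
  have hq : 0 < √(x ^ 2 + 4 * α * β) := (abs_nonneg _).trans_lt hlt
  have hratio : -1 < σ * x / √(x ^ 2 + 4 * α * β) := by
    rw [lt_div_iff₀ hq]; linarith [neg_abs_le (σ * x)]
  exact div_pos (by linarith) (by positivity)

theorem hasDerivAt_booleBranch (hα : 0 < α) (hβ : 0 < β) (σ x : ℝ) :
    HasDerivAt (booleBranch α β σ) (booleBranchDeriv α β σ x) x := by
  have hpos : 0 < x ^ 2 + 4 * α * β := by positivity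
  have hq : HasDerivAt (fun x ↦ √(x ^ 2 + 4 * α * β)) (x / √(x ^ 2 + 4 * α * β)) x := by
    convert ((hasDerivAt_pow 2 x).add_const (4 * α * β)).sqrt hpos.ne' using 1
    field_simp
    ring
  rw [booleBranchDeriv, mul_div_assoc]
  exact ((hasDerivAt_id' x).add (hq.const_mul σ)).div_const (2 * α)

theorem booleBranch_leftInverse (hα : 0 < α) (hβ : 0 < β) (hσ : σ ^ 2 = 1) :
    LeftInverse (fun y ↦ α * y - β / y) (booleBranch α β σ) := by
  intro x
  have hb : booleBranch α β σ x ≠ 0 := right_ne_zero_of_mul (mul_booleBranch_pos hα hβ hσ x).ne'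
  simp only [booleBranch] at hb ⊢
  set q := √(x ^ 2 + 4 * α * β)
  have hq : q ^ 2 = x ^ 2 + 4 * α * β := Real.sq_sqrt (by positivity)
  have hnum : x + σ * q ≠ 0 := left_ne_zero_of_mul hb
  field_simp
  linear_combination hq + q ^ 2 * hσ

theorem booleBranch_boole (hα : 0 < α) (hβ : 0 < β) (hσ : σ ^ 2 = 1) {y : ℝ} (hy : 0 < σ * y) :
    booleBranch α β σ (α * y - β / y) = y := by
  have hy0 : y ≠ 0 := right_ne_zero_of_mul hy.ne'
  -- `√((α y - β / y)² + 4αβ) = |α y + β / y|`, and `α y + β / y` has the sign `σ` of `y`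
  have hsum : 0 < σ * (α * y + β / y) := by
    have hσy : 0 < σ / y := by rw [← mul_div_mul_right σ y hy0, ← sq]; positivity
    rw [show σ * (α * y + β / y) = α * (σ * y) + β * (σ / y) by ring]
    positivity
  have hq : √((α * y - β / y) ^ 2 + 4 * α * β) = σ * (α * y + β / y) := by
    rw [← Real.sqrt_sq hsum.le]
    congr 1
    field_simp
    linear_combination (-(α * y ^ 2 + β) ^ 2) * hσ
  rw [booleBranch, hq]
  field_simp
  linear_combination (α * y ^ 2 + β) * hσ

theorem range_booleBranch (hα : 0 < α) (hβ : 0 < β) (hσ : σ ^ 2 = 1) :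
    range (booleBranch α β σ) = {y | 0 < σ * y} :=
  Subset.antisymm (range_subset_iff.mpr (mul_booleBranch_pos hα hβ hσ))
    fun _ hy ↦ ⟨_, booleBranch_boole hα hβ hσ hy⟩

theorem booleBranch_transfer_cauchyPDFReal (hα : 0 < α) (hβ : 0 < β) {γ : ℝ≥0}
    (hγ : (γ : ℝ) ^ 2 * (1 - α) = β) (x : ℝ) :
    |booleBranchDeriv α β 1 x| * cauchyPDFReal 0 γ (booleBranch α β 1 x) +
      |booleBranchDeriv α β (-1) x| *
        cauchyPDFReal 0 γ (booleBranch α β (-1) x) =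
      cauchyPDFReal 0 γ x := by
  rw [abs_of_pos (booleBranchDeriv_pos hα hβ (by norm_num) x),
    abs_of_pos (booleBranchDeriv_pos hα hβ (by norm_num) x)]
  simp only [cauchyPDFReal_def, booleBranchDeriv, booleBranch, sub_zero]
  set q := √(x ^ 2 + 4 * α * β)
  have hq : q ^ 2 = x ^ 2 + 4 * α * β := Real.sq_sqrt (by positivity)
  have hq0 : 0 < q := Real.sqrt_pos.mpr (by positivity)
  have hγ0 : 0 < (γ : ℝ) ^ 2 := by nlinarith
  field_simp
  linear_combination (γ * q * (x ^ 2 + 4 * α * x ^ 2 - 4 * α ^ 2 * γ ^ 2 - q ^ 2)) *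
    (hq - 4 * α * hγ)

theorem setIntegral_boole_preimage_cauchyPDFReal (hα : 0 < α) (hβ : 0 < β) {γ : ℝ≥0}
    (hγ : (γ : ℝ) ^ 2 * (1 - α) = β) {A : Set ℝ} (hA : MeasurableSet A) :
    ∫ y in (fun y ↦ α * y - β / y) ⁻¹' A, cauchyPDFReal 0 γ y = ∫ x in A, cauchyPDFReal 0 γ x := by
  have hpos : (1 : ℝ) ^ 2 = 1 := one_pow 2
  have hneg : (-1 : ℝ) ^ 2 = 1 := by norm_num
  refine setIntegral_preimage_eq_of_transfer (by fun_prop) hA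
    (booleBranch_leftInverse hα hβ hpos) (booleBranch_leftInverse hα hβ hneg)
    (hasDerivAt_booleBranch hα hβ 1) (hasDerivAt_booleBranch hα hβ (-1)) ?_ ?_ ?_
    (integrable_cauchyPDFReal 0) (booleBranch_transfer_cauchyPDFReal hα hβ hγ)
  all_goals simp only [range_booleBranch hα hβ hpos, range_booleBranch hα hβ hneg]
  · exact measurableSet_lt measurable_const (by fun_prop)
  · exact disjoint_left.mpr fun y (h₁ : 0 < 1 * y) (h₂ : 0 < -1 * y) ↦ by linarith
  · refine measure_mono_null (fun y hy ↦ ?_) (Real.volume_singleton (a := 0))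
    simp only [mem_compl_iff, mem_union, mem_ofPred_eq, not_or, not_lt] at hy
    exact mem_singleton_iff.mpr (le_antisymm (by linarith) (by linarith))

theorem cauchyPDFReal_zero_eq_sqrt_div (hα : α < 1) {γ : ℝ≥0}
    (hγ : (γ : ℝ) ^ 2 * (1 - α) = β) (x : ℝ) :
    cauchyPDFReal 0 γ x = √(β * (1 - α)) / (π * (x ^ 2 * (1 - α) + β)) := by
  have h1α : 0 < 1 - α := sub_pos.mpr hα
  have hsqrt : √(β * (1 - α)) = γ * (1 - α) := by
    rw [← hγ, show (γ : ℝ) ^ 2 * (1 - α) * (1 - α) = (γ * (1 - α)) ^ 2 by ring,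
      Real.sqrt_sq (by positivity)]
  rw [hsqrt, cauchyPDFReal_def, ← hγ, sub_zero,
    show x ^ 2 * (1 - α) + (γ : ℝ) ^ 2 * (1 - α) = (x ^ 2 + γ ^ 2) * (1 - α) by ring,
    ← mul_assoc, mul_div_mul_right _ _ h1α.ne', div_eq_mul_inv, mul_inv]
  ring

end Boole

theorem alpha_boole_preserves_cauchy (α β : ℝ) (hα : α ∈ Set.Ioo (0 : ℝ) 1) (hβ : 0 < β)
    (φ : ℝ → ℝ) (hφ : ∀ y, φ y = α * y - β / y)
    (A : Set ℝ) (hA : MeasurableSet A) :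
    ∫ x in φ ⁻¹' A, Real.sqrt (β * (1 - α)) / (Real.pi * (x ^ 2 * (1 - α) + β)) =
      ∫ x in A, Real.sqrt (β * (1 - α)) / (Real.pi * (x ^ 2 * (1 - α) + β)) := by
  obtain ⟨hα0, hα1⟩ := hα
  let γ : ℝ≥0 := ⟨√(β / (1 - α)), Real.sqrt_nonneg _⟩
  have hγ : (γ : ℝ) ^ 2 * (1 - α) = β := by
    have h1α : 0 < 1 - α := sub_pos.mpr hα1
    change √(β / (1 - α)) ^ 2 * (1 - α) = β
    rw [Real.sq_sqrt (by positivity), div_mul_cancel₀ _ h1α.ne']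
  have hφ' : φ = fun y ↦ α * y - β / y := funext hφ
  simp only [← cauchyPDFReal_zero_eq_sqrt_div hα1 hγ, hφ']
  exact setIntegral_boole_preimage_cauchyPDFReal hα0 hβ hγ hA
end

section
/- The classical Boole transformation B : ℝ\{0} → ℝ, B(x) = x − 1/x, preserves Lebesgue measure on ℝ: for every Borel set A ⊆ ℝ, Leb(B^{-1} A) = Leb(A). -/
/-!
Off the null set `{0}`, the map `B x = x - 1/x` restricts to bijections `(0, ∞) → ℝ` and
`(-∞, 0) → ℝ`, whose inverses are the roots `x₊ u > 0 > x₋ u` of `x² - u x - 1` (`boolePos`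
and `booleNeg`). Hence `B⁻¹(A)` is, up to a null set, the disjoint union of `x₊(A)` and `x₋(A)`,
and by the change of variables formula its measure is `∫_A (x₊' + x₋')`. Both branches are
increasing, and `x₊ + x₋ = u` gives `x₊' + x₋' = 1`.
-/

open MeasureTheory Set

theorem measure_eq_measure_inter_Iio_add_measure_inter_Ioi {α : Type*} [MeasurableSpace α]
    [LinearOrder α] [TopologicalSpace α] [OrderClosedTopology α] [OpensMeasurableSpace α]
    (μ : Measure α) [NullSingletonClass μ] (s : Set α) (a : α) :
    μ s = μ (s ∩ Iio a) + μ (s ∩ Ioi a) := by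
  rw [← measure_inter_add_sdiff s measurableSet_Iio, sdiff_eq, compl_Iio]
  exact congrArg _ (measure_congr (ae_eq_refl s |>.inter Ioi_ae_eq_Ici).symm)

noncomputable section

def boole (x : ℝ) : ℝ := x - 1 / x

def boolePos (u : ℝ) : ℝ := (u + √(u ^ 2 + 4)) / 2

def booleNeg (u : ℝ) : ℝ := (u - √(u ^ 2 + 4)) / 2

theorem abs_lt_sqrt_sq_add_four (u : ℝ) : |u| < √(u ^ 2 + 4) :=
  abs_lt.2 (Real.sq_lt.1 (by linarith))

theorem boolePos_pos (u : ℝ) : 0 < boolePos u :=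
  div_pos (by linarith [neg_abs_le u, abs_lt_sqrt_sq_add_four u]) two_pos

theorem booleNeg_neg (u : ℝ) : booleNeg u < 0 :=
  div_neg_of_neg_of_pos (by linarith [le_abs_self u, abs_lt_sqrt_sq_add_four u]) two_pos

theorem boolePos_add_booleNeg (u : ℝ) : boolePos u + booleNeg u = u := by
  unfold boolePos booleNeg
  ring

theorem boolePos_mul_booleNeg (u : ℝ) : boolePos u * booleNeg u = -1 := by
  have h : √(u ^ 2 + 4) ^ 2 = u ^ 2 + 4 := Real.sq_sqrt (by positivity)
  unfold boolePos booleNeg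
  linear_combination -h / 4

theorem boole_eq_iff {x : ℝ} (hx : x ≠ 0) (u : ℝ) :
    boole x = u ↔ x = boolePos u ∨ x = booleNeg u := by
  have hquad : boole x - u = (x - boolePos u) * (x - booleNeg u) / x := by
    rw [eq_div_iff hx, boole]
    field_simp
    linear_combination x * boolePos_add_booleNeg u - boolePos_mul_booleNeg u
  rw [← sub_eq_zero, hquad, div_eq_zero_iff, or_iff_left hx, mul_eq_zero, sub_eq_zero, sub_eq_zero]

theorem image_boolePos (A : Set ℝ) : boolePos '' A = boole ⁻¹' A ∩ Ioi 0 := by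
  ext x
  constructor
  · rintro ⟨u, hu, rfl⟩
    have := (boole_eq_iff (boolePos_pos u).ne' u).2 (.inl rfl)
    exact ⟨by rwa [mem_preimage, this], boolePos_pos u⟩
  · rintro ⟨hx, hx0 : 0 < x⟩
    rcases (boole_eq_iff hx0.ne' _).1 rfl with h | h
    · exact ⟨_, hx, h.symm⟩
    · exact absurd (h ▸ booleNeg_neg _) hx0.not_gt

theorem image_booleNeg (A : Set ℝ) : booleNeg '' A = boole ⁻¹' A ∩ Iio 0 := by
  ext x
  constructor
  · rintro ⟨u, hu, rfl⟩
    have := (boole_eq_iff (booleNeg_neg u).ne u).2 (.inr rfl)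
    exact ⟨by rwa [mem_preimage, this], booleNeg_neg u⟩
  · rintro ⟨hx, hx0 : x < 0⟩
    rcases (boole_eq_iff hx0.ne _).1 rfl with h | h
    · exact absurd (h ▸ boolePos_pos _) hx0.not_gt
    · exact ⟨_, hx, h.symm⟩

theorem hasDerivAt_sqrt_sq_add_four (u : ℝ) :
    HasDerivAt (fun u => √(u ^ 2 + 4)) (u / √(u ^ 2 + 4)) u := by
  convert ((hasDerivAt_pow 2 u).add_const 4).sqrt (by positivity) using 1
  field_simp
  ring

theorem hasDerivAt_boolePos (u : ℝ) :
    HasDerivAt boolePos ((√(u ^ 2 + 4) + u) / (2 * √(u ^ 2 + 4))) u := by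
  refine (((hasDerivAt_id' u).add (hasDerivAt_sqrt_sq_add_four u)).div_const 2).congr_deriv ?_
  field_simp

theorem hasDerivAt_booleNeg (u : ℝ) :
    HasDerivAt booleNeg ((√(u ^ 2 + 4) - u) / (2 * √(u ^ 2 + 4))) u := by
  refine (((hasDerivAt_id' u).sub (hasDerivAt_sqrt_sq_add_four u)).div_const 2).congr_deriv ?_
  field_simp

theorem boolePos_deriv_nonneg (u : ℝ) : 0 ≤ (√(u ^ 2 + 4) + u) / (2 * √(u ^ 2 + 4)) :=
  div_nonneg (by linarith [neg_abs_le u, abs_lt_sqrt_sq_add_four u]) (by positivity)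

theorem booleNeg_deriv_nonneg (u : ℝ) : 0 ≤ (√(u ^ 2 + 4) - u) / (2 * √(u ^ 2 + 4)) :=
  div_nonneg (by linarith [le_abs_self u, abs_lt_sqrt_sq_add_four u]) (by positivity)

theorem booleNeg_deriv_add_boolePos_deriv (u : ℝ) :
    ENNReal.ofReal ((√(u ^ 2 + 4) - u) / (2 * √(u ^ 2 + 4))) +
      ENNReal.ofReal ((√(u ^ 2 + 4) + u) / (2 * √(u ^ 2 + 4))) = 1 := by
  rw [← ENNReal.ofReal_add (booleNeg_deriv_nonneg u) (boolePos_deriv_nonneg u)]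
  convert ENNReal.ofReal_one
  field_simp
  ring

theorem monotone_boolePos : Monotone boolePos :=
  monotone_of_hasDerivAt_nonneg hasDerivAt_boolePos boolePos_deriv_nonneg

theorem volume_image_boolePos {A : Set ℝ} (hA : MeasurableSet A) :
    volume (boolePos '' A) =
      ∫⁻ u in A, ENNReal.ofReal ((√(u ^ 2 + 4) + u) / (2 * √(u ^ 2 + 4))) :=
  (lintegral_deriv_eq_volume_image_of_monotoneOn hA
    (fun u _ => (hasDerivAt_boolePos u).hasDerivWithinAt)
    (monotone_boolePos.monotoneOn A)).symm

theorem monotone_booleNeg : Monotone booleNeg :=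
  monotone_of_hasDerivAt_nonneg hasDerivAt_booleNeg booleNeg_deriv_nonneg

theorem volume_image_booleNeg {A : Set ℝ} (hA : MeasurableSet A) :
    volume (booleNeg '' A) =
      ∫⁻ u in A, ENNReal.ofReal ((√(u ^ 2 + 4) - u) / (2 * √(u ^ 2 + 4))) :=
  (lintegral_deriv_eq_volume_image_of_monotoneOn hA
    (fun u _ => (hasDerivAt_booleNeg u).hasDerivWithinAt)
    (monotone_booleNeg.monotoneOn A)).symm

end

theorem boole_preserves_lebesgue
    (B : ℝ → ℝ) (hB : ∀ x : ℝ, B x = x - 1 / x)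
    (A : Set ℝ) (hA : MeasurableSet A) :
    volume (B ⁻¹' A) = volume A := by
  obtain rfl : B = boole := funext hB
  rw [measure_eq_measure_inter_Iio_add_measure_inter_Ioi volume _ 0, ← image_booleNeg,
    ← image_boolePos, volume_image_booleNeg hA, volume_image_boolePos hA,
    ← lintegral_add_left (by fun_prop)]
  simp only [booleNeg_deriv_add_boolePos_deriv]
  exact setLIntegral_one A
end
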